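/- arXiv:2412.07866 — 6 statements merged into one kernel-verified Lean document; each statement's English description precedes it below -/
import Mathlib

section
/- For every real number a > 0 and every x0 ∈ ℝ, the weighted length of the unit interval centered at x0 does not exceed that of the unit interval centered at 2x0: ∫_{x0-1}^{x0+1} |t|^a dt ≤ ∫_{2x0-1}^{2x0+1} |t|^a dt, with equality when x0 = 0. -/
/-!
Write `F x = ∫_{x-r}^{x+r} f` for a continuous `f` that is nondecreasing in `|t|`, such as
`|t|^a` with `a ≥ 0`. Then `F' x = f (x + r) - f (x - r) ≥ 0` for `x ≥ 0`, because
`|x - r| ≤ |x + r|`, and `F` is even because `f` is. So `F` is nondecreasing in `|x|`, and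
`|x0| ≤ |2 x0|`.
-/

open MeasureTheory intervalIntegral

section Window

variable {f : ℝ → ℝ} {r : ℝ}

theorem hasDerivAt_integral_window (hf : Continuous f) (x : ℝ) :
    HasDerivAt (fun x => ∫ t in (x - r)..(x + r), f t) (f (x + r) - f (x - r)) x := by
  have hG (y : ℝ) : HasDerivAt (fun u => ∫ t in (0 : ℝ)..u, f t) (f y) y :=
    (hf.integral_hasStrictDerivAt 0 y).hasDerivAt
  have hsplit : (fun x => ∫ t in (x - r)..(x + r), f t) =
      fun x => (∫ t in (0 : ℝ)..(x + r), f t) - ∫ t in (0 : ℝ)..(x - r), f t := by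
    ext x
    exact (integral_interval_sub_left (hf.intervalIntegrable _ _)
      (hf.intervalIntegrable _ _)).symm
  rw [hsplit]
  exact ((hG _).comp_add_const x r).sub ((hG _).comp_sub_const x r)

theorem integral_window_neg (hf_even : ∀ t, f (-t) = f t) (x : ℝ) :
    ∫ t in (-x - r)..(-x + r), f t = ∫ t in (x - r)..(x + r), f t := by
  rw [show -x - r = -(x + r) by ring, show -x + r = -(x - r) by ring, ← integral_comp_neg]
  simp only [hf_even]

theorem monotoneOn_integral_window (hf : Continuous f)
    (hf_mono : ∀ s t, |s| ≤ |t| → f s ≤ f t) (hr : 0 ≤ r) :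
    MonotoneOn (fun x => ∫ t in (x - r)..(x + r), f t) (Set.Ici 0) := by
  refine monotoneOn_of_hasDerivWithinAt_nonneg (convex_Ici 0)
    (fun x _ => (hasDerivAt_integral_window hf x).continuousAt.continuousWithinAt)
    (fun x _ => (hasDerivAt_integral_window hf x).hasDerivWithinAt) fun x hx => ?_
  rw [interior_Ici, Set.mem_Ioi] at hx
  have : |x - r| ≤ |x + r| := abs_le_abs (by linarith) (by linarith)
  exact sub_nonneg.2 (hf_mono _ _ this)

theorem integral_window_le_of_abs_le (hf : Continuous f)
    (hf_mono : ∀ s t, |s| ≤ |t| → f s ≤ f t) (hr : 0 ≤ r) {x y : ℝ} (hxy : |x| ≤ |y|) :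
    ∫ t in (x - r)..(x + r), f t ≤ ∫ t in (y - r)..(y + r), f t := by
  have hf_even (t : ℝ) : f (-t) = f t :=
    le_antisymm (hf_mono _ _ (abs_neg t).le) (hf_mono _ _ (abs_neg t).ge)
  have h_abs (z : ℝ) : ∫ t in (|z| - r)..(|z| + r), f t = ∫ t in (z - r)..(z + r), f t := by
    rcases abs_choice z with h | h <;> rw [h]
    exact integral_window_neg hf_even z
  rw [← h_abs x, ← h_abs y]
  exact monotoneOn_integral_window hf hf_mono hr (abs_nonneg x) (abs_nonneg y) hxy

end Window

/-- For every `a > 0` and `x0 ∈ ℝ`, the `|t|^a`-weighted length of the unit interval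
centered at `x0` does not exceed that of the unit interval centered at `2 * x0`,
with equality when `x0 = 0`. -/
theorem stmt_0 (a : ℝ) (ha : 0 < a) (x0 : ℝ) :
    (∫ t in Set.Ioo (x0 - 1) (x0 + 1), |t| ^ a) ≤
      ∫ t in Set.Ioo (2 * x0 - 1) (2 * x0 + 1), |t| ^ a ∧
    (x0 = 0 →
      (∫ t in Set.Ioo (x0 - 1) (x0 + 1), |t| ^ a) =
        ∫ t in Set.Ioo (2 * x0 - 1) (2 * x0 + 1), |t| ^ a) := by
  refine ⟨?_, fun h => by rw [h, mul_zero]⟩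
  have h_window (c : ℝ) :
      ∫ t in Set.Ioo (c - 1) (c + 1), |t| ^ a = ∫ t in (c - 1)..(c + 1), |t| ^ a := by
    rw [integral_of_le (by linarith), integral_Ioc_eq_integral_Ioo]
  have hcont : Continuous fun t : ℝ => |t| ^ a :=
    continuous_abs.rpow_const fun _ => Or.inr ha.le
  have hx0 : |x0| ≤ |2 * x0| := by
    rw [abs_mul, abs_two]
    linarith [abs_nonneg x0]
  rw [h_window, h_window]
  exact integral_window_le_of_abs_le hcont
    (fun s t hst => Real.rpow_le_rpow (abs_nonneg s) hst ha.le) zero_le_one hx0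
end

section
/- Let N ≥ 1. For every real number a > 0 and every x0 ∈ ℝ^N, one has ∫_{B_1(x0)} ‖x‖^a dx ≤ ∫_{B_1(2x0)} ‖x‖^a dx, i.e. w_a(B_1(x0)) ≤ w_a(B_1(2x0)), with equality when x0 = 0. -/
/-!
Reflect in the perpendicular bisector of `x0` and `2 • x0`. This isometry maps
`B_1(x0) \ B_1(2x0)` into `B_1(2x0) \ B_1(x0)`, and since the origin lies on the side of `x0`,
it does not decrease the norm of points on that side. So the weight `‖x‖ ^ a`, which is
nondecreasing in `‖x‖`, only grows when the part of `B_1(x0)` outside `B_1(2x0)` is moved across.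
-/

open MeasureTheory Set
open scoped RealInnerProductSpace

theorem setIntegral_le_setIntegral_of_mapsTo_sdiff {α : Type*} [MeasurableSpace α]
    {μ : Measure α} {f : α → ℝ} {s t : Set α} {σ : α → α}
    (hσ : MeasurePreserving σ μ μ) (hσe : MeasurableEmbedding σ)
    (hs : MeasurableSet s) (ht : MeasurableSet t)
    (hfs : IntegrableOn f s μ) (hft : IntegrableOn f t μ) (hf : ∀ x ∈ t \ s, 0 ≤ f x)
    (hmaps : MapsTo σ (s \ t) (t \ s)) (hle : ∀ x ∈ s \ t, f x ≤ f (σ x)) :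
    ∫ x in s, f x ∂μ ≤ ∫ x in t, f x ∂μ := by
  have hfσ : IntegrableOn (f ∘ σ) (s \ t) μ :=
    (hσ.integrableOn_image hσe).mp (hft.mono_set (hmaps.image_subset.trans sdiff_subset))
  calc ∫ x in s, f x ∂μ = (∫ x in s ∩ t, f x ∂μ) + ∫ x in s \ t, f x ∂μ :=
        (integral_inter_add_sdiff ht hfs).symm
    _ ≤ (∫ x in s ∩ t, f x ∂μ) + ∫ x in s \ t, f (σ x) ∂μ :=
        add_le_add_right (setIntegral_mono_on (hfs.mono_set sdiff_subset) hfσ (hs.diff ht) hle) _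
    _ = (∫ x in t ∩ s, f x ∂μ) + ∫ x in σ '' (s \ t), f x ∂μ := by
        rw [inter_comm, hσ.setIntegral_image_emb hσe]
    _ ≤ (∫ x in t ∩ s, f x ∂μ) + ∫ x in t \ s, f x ∂μ :=
        add_le_add_right (setIntegral_mono_set (hft.mono_set sdiff_subset)
          ((ae_restrict_iff' (ht.diff hs)).mpr (ae_of_all _ hf)) hmaps.image_subset.eventuallyLE) _
    _ = ∫ x in t, f x ∂μ := integral_inter_add_sdiff hs hft

section PerpBisectorReflection

variable {E : Type*} [NormedAddCommGroup E] [InnerProductSpace ℝ E]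

noncomputable def perpBisectorReflection (p q : E) : E ≃ᵢ E :=
  ((IsometryEquiv.subRight (midpoint ℝ p q)).trans
    (ℝ ∙ (q - p))ᗮ.reflection.toIsometryEquiv).trans (IsometryEquiv.addRight (midpoint ℝ p q))

theorem perpBisectorReflection_apply (p q x : E) :
    perpBisectorReflection p q x =
      (ℝ ∙ (q - p))ᗮ.reflection (x - midpoint ℝ p q) + midpoint ℝ p q :=
  rfl

theorem perpBisectorReflection_involutive (p q : E) :
    Function.Involutive (perpBisectorReflection p q) := fun x => by
  simp only [perpBisectorReflection_apply, add_sub_cancel_right,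
    Submodule.reflection_reflection, sub_add_cancel]

theorem perpBisectorReflection_left (p q : E) : perpBisectorReflection p q p = q := by
  have hmem : q - midpoint ℝ p q ∈ ℝ ∙ (q - p) := by
    rw [right_sub_midpoint]
    exact Submodule.smul_mem _ _ (Submodule.mem_span_singleton_self _)
  have hneg : p - midpoint ℝ p q = -(q - midpoint ℝ p q) := by
    rw [left_sub_midpoint, right_sub_midpoint]; module
  rw [perpBisectorReflection_apply, hneg, map_neg,
    Submodule.reflection_mem_subspace_orthogonal_precomplement_eq_neg hmem]
  abel

theorem perpBisectorReflection_right (p q : E) : perpBisectorReflection p q q = p := by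
  simpa only [perpBisectorReflection_left] using perpBisectorReflection_involutive p q p

theorem dist_perpBisectorReflection_right (p q x : E) :
    dist (perpBisectorReflection p q x) q = dist x p := by
  nth_rw 2 [← perpBisectorReflection_left p q]
  exact (perpBisectorReflection p q).dist_eq x p

theorem dist_perpBisectorReflection_left (p q x : E) :
    dist (perpBisectorReflection p q x) p = dist x q := by
  nth_rw 2 [← perpBisectorReflection_right p q]
  exact (perpBisectorReflection p q).dist_eq x q

-- For `p = q` the quotient is the junk value `0`, matching `perpBisectorReflection p p = id`.
theorem norm_perpBisectorReflection_sq (p q x : E) :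
    ‖perpBisectorReflection p q x‖ ^ 2 =
      ‖x‖ ^ 2 + (‖q‖ ^ 2 - ‖p‖ ^ 2) * (dist x q ^ 2 - dist x p ^ 2) / dist p q ^ 2 := by
  have hm : midpoint ℝ p q = (2 : ℝ)⁻¹ • (p + q) := by rw [midpoint_eq_smul_add, invOf_eq_inv]
  set m := midpoint ℝ p q
  set u := q - p
  set t := ⟪u, x - m⟫ / ‖u‖ ^ 2
  have hσ : perpBisectorReflection p q x = x - (2 * t) • u := by
    rw [perpBisectorReflection_apply, Submodule.reflection_orthogonal_apply,
      Submodule.reflection_singleton_apply]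
    module
  have hdist : dist x q ^ 2 - dist x p ^ 2 = -2 * ⟪u, x - m⟫ := by
    have hxp : x - p = (x - m) + (2 : ℝ)⁻¹ • u := by rw [hm]; module
    have hxq : x - q = (x - m) - (2 : ℝ)⁻¹ • u := by rw [hm]; module
    rw [dist_eq_norm, dist_eq_norm, hxp, hxq, norm_add_sq_real, norm_sub_sq_real,
      inner_smul_right, real_inner_comm]
    ring
  have hcenter : ⟪x, u⟫ - ⟪u, x - m⟫ = (‖q‖ ^ 2 - ‖p‖ ^ 2) / 2 := by
    rw [real_inner_comm, ← inner_sub_right, sub_sub_cancel, hm, inner_smul_right,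
      inner_add_right, inner_sub_left, inner_sub_left, real_inner_self_eq_norm_sq,
      real_inner_self_eq_norm_sq, real_inner_comm p q]
    ring
  have htu : t ^ 2 * ‖u‖ ^ 2 = t * ⟪u, x - m⟫ := by
    rcases eq_or_ne ‖u‖ 0 with hu | hu
    · simp [t, hu]
    · simp only [t]; field_simp
  rw [hσ, norm_sub_sq_real, inner_smul_right, norm_smul, mul_pow, Real.norm_eq_abs, sq_abs,
    hdist, dist_comm p q, dist_eq_norm]
  have hA : (‖q‖ ^ 2 - ‖p‖ ^ 2) * (-2 * ⟪u, x - m⟫) / ‖u‖ ^ 2 =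
      -2 * (‖q‖ ^ 2 - ‖p‖ ^ 2) * t := by
    simp only [t]; ring
  rw [hA]
  linear_combination 4 * htu - 4 * t * hcenter

theorem norm_le_norm_perpBisectorReflection {p q x : E} (hpq : ‖p‖ ≤ ‖q‖)
    (hx : dist x p ≤ dist x q) : ‖x‖ ≤ ‖perpBisectorReflection p q x‖ := by
  have hpq2 : 0 ≤ ‖q‖ ^ 2 - ‖p‖ ^ 2 := sub_nonneg.mpr (pow_le_pow_left₀ (norm_nonneg p) hpq 2)
  have hx2 : 0 ≤ dist x q ^ 2 - dist x p ^ 2 :=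
    sub_nonneg.mpr (pow_le_pow_left₀ dist_nonneg hx 2)
  refine (sq_le_sq₀ (norm_nonneg _) (norm_nonneg _)).mp ?_
  rw [norm_perpBisectorReflection_sq]
  exact le_add_of_nonneg_right (by positivity)

end PerpBisectorReflection

theorem setIntegral_ball_le_of_norm_le {E : Type*} [NormedAddCommGroup E] [InnerProductSpace ℝ E]
    [FiniteDimensional ℝ E] [MeasurableSpace E] [BorelSpace E] {φ : ℝ → ℝ}
    (hφc : ContinuousOn φ (Ici 0)) (hφm : MonotoneOn φ (Ici 0)) (hφ0 : 0 ≤ φ 0)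
    {p q : E} (hpq : ‖p‖ ≤ ‖q‖) (r : ℝ) :
    ∫ x in Metric.ball p r, φ ‖x‖ ≤ ∫ x in Metric.ball q r, φ ‖x‖ := by
  set σ := perpBisectorReflection p q
  have hcont : Continuous fun x : E => φ ‖x‖ :=
    hφc.comp_continuous continuous_norm fun x => norm_nonneg x
  have hint (c : E) : IntegrableOn (fun x : E => φ ‖x‖) (Metric.ball c r) :=
    (hcont.continuousOn.integrableOn_compact (isCompact_closedBall c r)).mono_set
      Metric.ball_subset_closedBall
  have hσ : MeasurePreserving σ :=
    (measurePreserving_add_right volume _).comp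
      ((Submodule.reflection _).measurePreserving.comp (measurePreserving_sub_right volume _))
  refine setIntegral_le_setIntegral_of_mapsTo_sdiff hσ σ.toHomeomorph.measurableEmbedding
    Metric.isOpen_ball.measurableSet Metric.isOpen_ball.measurableSet (hint p) (hint q)
    (fun x _ => hφ0.trans (hφm self_mem_Ici (norm_nonneg x) (norm_nonneg x))) ?_ ?_
  · rintro x ⟨hxp, hxq⟩
    simp only [mem_sdiff, Metric.mem_ball, not_lt] at hxp hxq ⊢
    rw [dist_perpBisectorReflection_right, dist_perpBisectorReflection_left]
    exact ⟨hxp, hxq⟩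
  · rintro x ⟨hxp, hxq⟩
    simp only [Metric.mem_ball, not_lt] at hxp hxq
    exact hφm (norm_nonneg x) (norm_nonneg _)
      (norm_le_norm_perpBisectorReflection hpq (hxp.le.trans hxq))

theorem stmt_1_general (N : ℕ) (a : ℝ) (ha : 0 < a)
    (x0 : EuclideanSpace ℝ (Fin N)) :
    (∫ x in Metric.ball x0 1, ‖x‖ ^ a) ≤
      ∫ x in Metric.ball ((2 : ℝ) • x0) 1, ‖x‖ ^ a ∧
    (x0 = 0 →
      (∫ x in Metric.ball x0 1, ‖x‖ ^ a) =
        ∫ x in Metric.ball ((2 : ℝ) • x0) 1, ‖x‖ ^ a) := by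
  refine ⟨?_, fun h => by subst h; simp⟩
  have hnorm : ‖x0‖ ≤ ‖(2 : ℝ) • x0‖ := by
    rw [norm_smul, Real.norm_two]; linarith [norm_nonneg x0]
  exact setIntegral_ball_le_of_norm_le (Real.continuous_rpow_const ha.le).continuousOn
    (Real.monotoneOn_rpow_Ici_of_exponent_nonneg ha.le) (Real.zero_rpow ha.ne').ge hnorm 1

/-- For `a > 0` and `x0 ∈ ℝ^N`, `w_a(B_1(x0)) ≤ w_a(B_1(2x0))`, with equality when `x0 = 0`. -/
theorem stmt_1 (N : ℕ) (hN : 1 ≤ N) (a : ℝ) (ha : 0 < a)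
    (x0 : EuclideanSpace ℝ (Fin N)) :
    (∫ x in Metric.ball x0 1, ‖x‖ ^ a) ≤
      ∫ x in Metric.ball ((2 : ℝ) • x0) 1, ‖x‖ ^ a ∧
    (x0 = 0 →
      (∫ x in Metric.ball x0 1, ‖x‖ ^ a) =
        ∫ x in Metric.ball ((2 : ℝ) • x0) 1, ‖x‖ ^ a) :=
  stmt_1_general N a ha x0
end

section
/- Let N ≥ 1, a > 0 and x0 ∈ ℝ^N. Then the weighted measure of the part of B_1(x0) lying outside B_1(2x0) does not exceed that of the part of B_1(2x0) lying outside B_1(x0): ∫_{B_1(x0) \ B_1(2x0)} ‖x‖^a dx ≤ ∫_{B_1(2x0) \ B_1(x0)} ‖x‖^a dx. -/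
/-!
The reflection `x ↦ 3 • x₀ - x` preserves Lebesgue (indeed any Haar) measure and exchanges
`B_r(x₀) \ B_r(2x₀)` with `B_r(2x₀) \ B_r(x₀)`. Points of the first set are closer to `x₀` than
to `2x₀`, i.e. lie on the side `2⟪x, x₀⟫ ≤ 3‖x₀‖²` of the bisecting hyperplane, and this is exactly
the side on which they are closer to `0` than to `3x₀`. So the reflection does not decrease the
norm on the first set, and any weight that is monotone in `‖x‖` has at least as much mass on the
second set.
-/

open MeasureTheory Metric Set

section

variable {E : Type*}

theorem preimage_const_sub_ball [SeminormedAddCommGroup E] (p c : E) (r : ℝ) :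
    (fun x => p - x) ⁻¹' ball c r = ball (p - c) r := by
  ext x
  simp only [mem_preimage, mem_ball, dist_eq_norm, ← norm_neg (p - x - c)]
  congr! 2
  abel

variable [NormedAddCommGroup E] [InnerProductSpace ℝ E]

theorem norm_le_norm_three_smul_sub_iff (x x₀ : E) :
    ‖x‖ ≤ ‖(3 : ℝ) • x₀ - x‖ ↔ ‖x - x₀‖ ≤ ‖x - (2 : ℝ) • x₀‖ := by
  rw [← sq_le_sq₀ (norm_nonneg _) (norm_nonneg _), ← sq_le_sq₀ (norm_nonneg _) (norm_nonneg _),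
    norm_sub_sq_real, norm_sub_sq_real, norm_sub_sq_real, real_inner_smul_left,
    real_inner_smul_right, norm_smul, norm_smul, real_inner_comm]
  norm_num
  constructor <;> intro h <;> nlinarith

theorem preimage_three_smul_sub_ball_diff (x₀ : E) (r : ℝ) :
    (fun x => (3 : ℝ) • x₀ - x) ⁻¹' (ball ((2 : ℝ) • x₀) r \ ball x₀ r) =
      ball x₀ r \ ball ((2 : ℝ) • x₀) r := by
  rw [preimage_sdiff, preimage_const_sub_ball, preimage_const_sub_ball]
  congr 2 <;> module

theorem setIntegral_ball_diff_ball_two_smul_le [MeasurableSpace E] [BorelSpace E] (μ : Measure E)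
    [μ.IsAddLeftInvariant] [μ.IsNegInvariant] {g : ℝ → ℝ} (hg : MonotoneOn g (Ici 0)) (x₀ : E)
    (r : ℝ) (hint₁ : IntegrableOn (fun x => g ‖x‖) (ball x₀ r \ ball ((2 : ℝ) • x₀) r) μ)
    (hint₂ : IntegrableOn (fun x => g ‖x‖) (ball ((2 : ℝ) • x₀) r \ ball x₀ r) μ) :
    ∫ x in ball x₀ r \ ball ((2 : ℝ) • x₀) r, g ‖x‖ ∂μ ≤
      ∫ x in ball ((2 : ℝ) • x₀) r \ ball x₀ r, g ‖x‖ ∂μ := by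
  set σ : E → E := fun x => (3 : ℝ) • x₀ - x
  have hσ : MeasurePreserving σ μ μ := Measure.measurePreserving_sub_left μ _
  have hσ_emb : MeasurableEmbedding σ := (Homeomorph.subLeft ((3 : ℝ) • x₀)).measurableEmbedding
  have hpre : σ ⁻¹' (ball ((2 : ℝ) • x₀) r \ ball x₀ r) = ball x₀ r \ ball ((2 : ℝ) • x₀) r :=
    preimage_three_smul_sub_ball_diff x₀ r
  rw [← hσ.setIntegral_preimage_emb hσ_emb (fun y => g ‖y‖)
    (ball ((2 : ℝ) • x₀) r \ ball x₀ r), hpre]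
  refine setIntegral_mono_on hint₁ ?_ (measurableSet_ball.diff measurableSet_ball) ?_
  · rw [← hpre]
    exact (hσ.integrableOn_comp_preimage hσ_emb).mpr hint₂
  · rintro x ⟨hx₁, hx₂⟩
    have hcloser : ‖x - x₀‖ ≤ ‖x - (2 : ℝ) • x₀‖ := by
      rw [mem_ball, dist_eq_norm] at hx₁
      rw [mem_ball, dist_eq_norm, not_lt] at hx₂
      linarith
    exact hg (norm_nonneg _) (norm_nonneg _) ((norm_le_norm_three_smul_sub_iff x x₀).mpr hcloser)

end

theorem stmt_5_general (N : ℕ) (a : ℝ) (ha : 0 < a)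
    (x0 : EuclideanSpace ℝ (Fin N)) :
    (∫ x in Metric.ball x0 1 \ Metric.ball ((2 : ℝ) • x0) 1, ‖x‖ ^ a) ≤
      ∫ x in Metric.ball ((2 : ℝ) • x0) 1 \ Metric.ball x0 1, ‖x‖ ^ a := by
  have hint : ∀ c, IntegrableOn (fun x : EuclideanSpace ℝ (Fin N) => ‖x‖ ^ a) (ball c 1) := by
    intro c
    have hcont : Continuous fun x : EuclideanSpace ℝ (Fin N) => ‖x‖ ^ a :=
      continuous_norm.rpow_const fun _ => Or.inr ha.le
    exact (hcont.locallyIntegrable.integrableOn_isCompact (isCompact_closedBall c 1)).mono_set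
      ball_subset_closedBall
  exact setIntegral_ball_diff_ball_two_smul_le volume
    (Real.monotoneOn_rpow_Ici_of_exponent_nonneg ha.le) x0 1
    ((hint x0).mono_set sdiff_subset) ((hint _).mono_set sdiff_subset)

/-- For `a > 0` and `x0 ∈ ℝ^N`,
`w_a(B_1(x0) \ B_1(2x0)) ≤ w_a(B_1(2x0) \ B_1(x0))`. -/
theorem stmt_5 (N : ℕ) (hN : 1 ≤ N) (a : ℝ) (ha : 0 < a)
    (x0 : EuclideanSpace ℝ (Fin N)) :
    (∫ x in Metric.ball x0 1 \ Metric.ball ((2 : ℝ) • x0) 1, ‖x‖ ^ a) ≤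
      ∫ x in Metric.ball ((2 : ℝ) • x0) 1 \ Metric.ball x0 1, ‖x‖ ^ a :=
  stmt_5_general N a ha x0
end

section
/- Let N ≥ 1 and A = (a_1, …, a_N) with a_i ≥ 0 for all i. For x0 ∈ ℝ^N and R > 0 let Q_R(x0) = ∏_{i=1}^N (x0_i - R, x0_i + R) be the open cube of half-side R centered at x0. Then ∫_{Q_{2R}(x0)} ∏_{i=1}^N |x_i|^{a_i} dx ≤ 2^{N_A} ∫_{Q_R(x0)} ∏_{i=1}^N |x_i|^{a_i} dx, where N_A = N + a_1 + ⋯ + a_N; that is, the monomial weight x^A is doubling on cubes with doubling constant 2^{N_A}. -/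
open MeasureTheory

/-!
Fubini splits both integrals into products of one-dimensional ones, so it suffices to treat
the weight `|t|^a` on intervals. The substitution `t = 2s` turns its integral over
`(c - 2r, c + 2r)` into `2^(1+a)` times the one over `(c/2 - r, c/2 + r)`. The integral over an
interval of fixed length `2r` centred at `m` depends only on `|m|` and increases with it: moving
the centre to the right trades a piece on the left for its translate by `2r`, where the weight
is at least as large.
-/

theorem setIntegral_univ_pi_prod_eq_prod {ι 𝕜 : Type*} [Fintype ι] [RCLike 𝕜] {E : ι → Type*}
    [∀ i, MeasureSpace (E i)] [∀ i, SigmaFinite (volume : Measure (E i))]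
    (f : (i : ι) → E i → 𝕜) (s : (i : ι) → Set (E i)) :
    ∫ x in Set.univ.pi s, ∏ i, f i (x i) = ∏ i, ∫ t in s i, f i t := by
  rw [volume_pi, Measure.restrict_pi_pi, integral_fintype_prod_eq_prod]

theorem integral_Ioo_eq_intervalIntegral {E : Type*} [NormedAddCommGroup E] [NormedSpace ℝ E]
    {f : ℝ → E} {l r : ℝ} (h : l ≤ r) :
    ∫ t in Set.Ioo l r, f t = ∫ t in l..r, f t := by
  rw [intervalIntegral.integral_of_le h, integral_Ioc_eq_integral_Ioo]

section RpowAbs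

variable {a : ℝ}

theorem continuous_rpow_abs (ha : 0 ≤ a) : Continuous fun t : ℝ => |t| ^ a :=
  (Real.continuous_rpow_const ha).comp continuous_abs

theorem intervalIntegrable_rpow_abs (ha : 0 ≤ a) (l r : ℝ) :
    IntervalIntegrable (fun t : ℝ => |t| ^ a) volume l r :=
  (continuous_rpow_abs ha).intervalIntegrable l r

theorem intervalIntegral_rpow_abs_neg_center (m r : ℝ) :
    ∫ t in (-m - r)..(-m + r), |t| ^ a = ∫ t in (m - r)..(m + r), |t| ^ a := by
  have h := intervalIntegral.integral_comp_neg (a := -m - r) (b := -m + r) (fun t => |t| ^ a)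
  simp only [abs_neg] at h
  rw [h]
  congr 1 <;> ring

theorem intervalIntegral_rpow_abs_two_mul (l r : ℝ) :
    ∫ t in (2 * l)..(2 * r), |t| ^ a = 2 ^ (1 + a) * ∫ t in l..r, |t| ^ a := by
  have hscale (t : ℝ) : |2 * t| ^ a = 2 ^ a * |t| ^ a := by
    rw [abs_mul, abs_two, Real.mul_rpow zero_le_two (abs_nonneg t)]
  rw [← intervalIntegral.smul_integral_comp_mul_left (fun t => |t| ^ a) 2, smul_eq_mul]
  simp only [hscale, intervalIntegral.integral_const_mul, Real.rpow_add two_pos, Real.rpow_one,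
    mul_assoc]

theorem monotoneOn_intervalIntegral_rpow_abs (ha : 0 ≤ a) {r : ℝ} (hr : 0 ≤ r) :
    MonotoneOn (fun m => ∫ t in (m - r)..(m + r), |t| ^ a) (Set.Ici 0) := by
  intro m hm n _ hmn
  rw [Set.mem_Ici] at hm
  have hpointwise : ∀ t ∈ Set.Icc (m - r) (n - r), |t| ^ a ≤ |t + 2 * r| ^ a := by
    intro t ht
    refine Real.rpow_le_rpow (abs_nonneg t) ?_ ha
    exact abs_le_abs (by linarith) (by linarith [ht.1])
  have hshift : ∫ t in (m - r)..(n - r), |t| ^ a ≤ ∫ t in (m + r)..(n + r), |t| ^ a :=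
    calc ∫ t in (m - r)..(n - r), |t| ^ a
        ≤ ∫ t in (m - r)..(n - r), |t + 2 * r| ^ a :=
          intervalIntegral.integral_mono_on (by linarith) (intervalIntegrable_rpow_abs ha _ _)
            (((continuous_rpow_abs ha).comp (continuous_add_const _)).intervalIntegrable _ _)
            hpointwise
      _ = ∫ t in (m + r)..(n + r), |t| ^ a := by
          rw [intervalIntegral.integral_comp_add_right (fun t => |t| ^ a)]
          congr 1 <;> ring
  have hleft := intervalIntegral.integral_add_adjacent_intervals
    (intervalIntegrable_rpow_abs ha (m - r) (n - r))
    (intervalIntegrable_rpow_abs ha (n - r) (n + r))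
  have hright := intervalIntegral.integral_add_adjacent_intervals
    (intervalIntegrable_rpow_abs ha (m - r) (m + r))
    (intervalIntegrable_rpow_abs ha (m + r) (n + r))
  dsimp only
  linarith

theorem intervalIntegral_rpow_abs_two_mul_radius_le (ha : 0 ≤ a) (c : ℝ) {r : ℝ} (hr : 0 ≤ r) :
    ∫ t in (c - 2 * r)..(c + 2 * r), |t| ^ a ≤ 2 ^ (1 + a) * ∫ t in (c - r)..(c + r), |t| ^ a := by
  have habs (m : ℝ) : ∫ t in (m - r)..(m + r), |t| ^ a = ∫ t in (|m| - r)..(|m| + r), |t| ^ a := by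
    rcases abs_choice m with hm | hm
    · rw [hm]
    · rw [hm, intervalIntegral_rpow_abs_neg_center]
  calc ∫ t in (c - 2 * r)..(c + 2 * r), |t| ^ a
      = 2 ^ (1 + a) * ∫ t in (c / 2 - r)..(c / 2 + r), |t| ^ a := by
        rw [← intervalIntegral_rpow_abs_two_mul]
        congr 1 <;> ring
    _ ≤ 2 ^ (1 + a) * ∫ t in (c - r)..(c + r), |t| ^ a := by
        rw [habs, habs c]
        gcongr
        refine monotoneOn_intervalIntegral_rpow_abs ha hr (abs_nonneg (c / 2)) (abs_nonneg c) ?_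
        rw [abs_div, abs_two]
        linarith [abs_nonneg c]

theorem setIntegral_Ioo_rpow_abs_two_mul_radius_le (ha : 0 ≤ a) (c : ℝ) {r : ℝ} (hr : 0 ≤ r) :
    ∫ t in Set.Ioo (c - 2 * r) (c + 2 * r), |t| ^ a ≤
      2 ^ (1 + a) * ∫ t in Set.Ioo (c - r) (c + r), |t| ^ a := by
  rw [integral_Ioo_eq_intervalIntegral (by linarith),
    integral_Ioo_eq_intervalIntegral (by linarith)]
  exact intervalIntegral_rpow_abs_two_mul_radius_le ha c hr

end RpowAbs

theorem stmt_9_general (N : ℕ) (a : Fin N → ℝ) (ha : ∀ i, 0 ≤ a i)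
    (x0 : Fin N → ℝ) (R : ℝ) (hR : 0 < R) :
    (∫ x in Set.univ.pi (fun i => Set.Ioo (x0 i - 2 * R) (x0 i + 2 * R)),
        ∏ i, |x i| ^ a i) ≤
      2 ^ ((N : ℝ) + ∑ i, a i) *
        ∫ x in Set.univ.pi (fun i => Set.Ioo (x0 i - R) (x0 i + R)),
          ∏ i, |x i| ^ a i := by
  have hconst : (2 : ℝ) ^ ((N : ℝ) + ∑ i, a i) = ∏ i, (2 : ℝ) ^ (1 + a i) := by
    rw [← Real.rpow_sum_of_pos two_pos, Finset.sum_add_distrib]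
    simp
  rw [setIntegral_univ_pi_prod_eq_prod (fun i t => |t| ^ a i),
    setIntegral_univ_pi_prod_eq_prod (fun i t => |t| ^ a i), hconst, ← Finset.prod_mul_distrib]
  refine Finset.prod_le_prod (fun i _ => ?_) fun i _ =>
    setIntegral_Ioo_rpow_abs_two_mul_radius_le (ha i) (x0 i) hR.le
  exact setIntegral_nonneg measurableSet_Ioo fun t _ => Real.rpow_nonneg (abs_nonneg t) _

/-- The monomial weight `x^A = ∏ |x_i|^{a_i}` is doubling on cubes with doubling
constant `2^{N_A}`, where `N_A = N + a_1 + ⋯ + a_N`. -/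
theorem stmt_9 (N : ℕ) (hN : 1 ≤ N) (a : Fin N → ℝ) (ha : ∀ i, 0 ≤ a i)
    (x0 : Fin N → ℝ) (R : ℝ) (hR : 0 < R) :
    (∫ x in Set.univ.pi (fun i => Set.Ioo (x0 i - 2 * R) (x0 i + 2 * R)),
        ∏ i, |x i| ^ a i) ≤
      2 ^ ((N : ℝ) + ∑ i, a i) *
        ∫ x in Set.univ.pi (fun i => Set.Ioo (x0 i - R) (x0 i + R)),
          ∏ i, |x i| ^ a i :=
  stmt_9_general N a ha x0 R hR
end

section
/- Let N ≥ 1, p > 1, s > 0, and let A = (a_1, …, a_N) with a_i ≥ 0 for all i; set u(y) = ‖y‖^{-s}, x^A = ∏_{i=1}^N |x_i|^{a_i} and N_A = N + a_1 + ⋯ + a_N. Then at every point x ∈ ℝ^N all of whose coordinates are nonzero, the vector field V(y) = y^A ‖∇u(y)‖^{p-2} ∇u(y) is differentiable and -div V(x) = s^{p-1} (N_A - (p-1)s - p) · x^A · ‖x‖^{-(p-1)s-p}. In particular, for 1 < s < (N_A - p)/(p-1) one has -div(x^A ‖∇(‖x‖^{-s})‖^{p-2} ∇(‖x‖^{-s}))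 = C₂ x^A ‖x‖^{-s-2-(p-2)(s+1)} with C₂ = s^{p-1}(N_A - (p-2)(s+1) - 2 - s) > 0. -/
/-!
Away from the origin `∇‖y‖^{-s} = -s ‖y‖^{-s-2} y`, so the field is `V(y) = f(y) y` with
`f(y) = -s^{p-1} y^A ‖y‖^{-(p-1)s-p}`. For any scalar `f`, `div (f y) = N f + ∇f · y`, and by
Euler's identity `∇f · y = d f` when `f` is positively homogeneous of degree `d`; here
`d = a_1 + ⋯ + a_N - (p-1)s - p`, so `div V = (N_A - (p-1)s - p) f`.
-/

open Filter Topology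

theorem fderiv_apply_self_of_homogeneous {E : Type*} [NormedAddCommGroup E] [NormedSpace ℝ E]
    {f : E → ℝ} {x : E} {d : ℝ} (hf : DifferentiableAt ℝ f x)
    (hhom : ∀ t : ℝ, 0 < t → f (t • x) = t ^ d * f x) :
    fderiv ℝ f x x = d * f x := by
  have hray : HasDerivAt (fun t : ℝ => f (t • x)) (fderiv ℝ f x x) 1 := by
    have := hf.hasFDerivAt.comp_hasDerivAt_of_eq 1
      ((hasDerivAt_id (1 : ℝ)).smul_const x) (one_smul ℝ x).symm
    rw [one_smul] at this
    exact this
  have hpow : HasDerivAt (fun t : ℝ => t ^ d * f x) (d * 1 ^ (d - 1) * f x) 1 :=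
    (Real.hasDerivAt_rpow_const (Or.inl one_ne_zero)).mul_const _
  have heq : (fun t : ℝ => f (t • x)) =ᶠ[𝓝 1] fun t => t ^ d * f x :=
    (eventually_gt_nhds one_pos).mono hhom
  simpa using hray.unique (hpow.congr_of_eventuallyEq heq)

theorem sum_fderiv_smul_self_apply_single {ι : Type*} [Fintype ι] [DecidableEq ι]
    {f : EuclideanSpace ℝ ι → ℝ} {x : EuclideanSpace ℝ ι} (hf : DifferentiableAt ℝ f x) :
    ∑ i, fderiv ℝ (fun y => f y • y) x (EuclideanSpace.single i 1) i =
      Fintype.card ι * f x + fderiv ℝ f x x := by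
  have h : HasFDerivAt (fun y => f y • y) _ x := hf.hasFDerivAt.smul (hasFDerivAt_id x)
  rw [h.fderiv]
  simp only [add_apply, smul_apply, ContinuousLinearMap.id_apply,
    ContinuousLinearMap.smulRight_apply, PiLp.add_apply, PiLp.smul_apply, PiLp.single_eq_same,
    smul_eq_mul, mul_one]
  rw [Finset.sum_add_distrib, Finset.sum_const, Finset.card_univ, nsmul_eq_mul]
  congr 1
  generalize fderiv ℝ f x = L
  conv_rhs => rw [← (EuclideanSpace.basisFun ι ℝ).sum_repr x]
  simp [mul_comm]

theorem hasGradientAt_norm_rpow {E : Type*} [NormedAddCommGroup E] [InnerProductSpace ℝ E]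
    [CompleteSpace E] {x : E} (hx : x ≠ 0) (r : ℝ) :
    HasGradientAt (fun y => ‖y‖ ^ r) ((r * ‖x‖ ^ (r - 2)) • x) x := by
  rw [hasGradientAt_iff_hasFDerivAt]
  have h := (hasStrictFDerivAt_norm_sq x).hasFDerivAt.rpow_const (p := r / 2)
    (Or.inl (by positivity))
  have hpow : ∀ y : E, (‖y‖ ^ 2) ^ (r / 2) = ‖y‖ ^ r := fun y => by
    rw [← Real.rpow_natCast, ← Real.rpow_mul (norm_nonneg y)]
    ring_nf
  have hpow' : (‖x‖ ^ 2) ^ (r / 2 - 1) = ‖x‖ ^ (r - 2) := by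
    rw [← Real.rpow_natCast, ← Real.rpow_mul (norm_nonneg x)]
    ring_nf
  simp only [hpow, hpow'] at h
  refine h.congr_fderiv ?_
  ext z
  simp [InnerProductSpace.toDual_apply_apply]
  ring

theorem norm_rpow_smul_gradient_norm_rpow {E : Type*} [NormedAddCommGroup E]
    [InnerProductSpace ℝ E] [CompleteSpace E] {s : ℝ} (hs : 0 < s) {y : E} (hy : y ≠ 0) (p : ℝ) :
    ‖gradient (fun z : E => ‖z‖ ^ (-s)) y‖ ^ (p - 2) • gradient (fun z : E => ‖z‖ ^ (-s)) y =
      (-s ^ (p - 1) * ‖y‖ ^ (-(p - 1) * s - p)) • y := by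
  have hny : 0 < ‖y‖ := norm_pos_iff.2 hy
  have hnorm : ‖y‖ ^ (-s - 2) * ‖y‖ = ‖y‖ ^ (-s - 1) := by
    rw [← Real.rpow_add_one hny.ne']
    ring_nf
  have hs_pow : s ^ (p - 2) * s = s ^ (p - 1) := by
    rw [← Real.rpow_add_one hs.ne']
    ring_nf
  have hnorm_pow : ‖y‖ ^ ((-s - 1) * (p - 2)) * ‖y‖ ^ (-s - 2) = ‖y‖ ^ (-(p - 1) * s - p) := by
    rw [← Real.rpow_add hny]
    ring_nf
  rw [(hasGradientAt_norm_rpow hy (-s)).gradient, smul_smul, norm_smul, Real.norm_eq_abs,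
    abs_mul, abs_neg, abs_of_pos hs, abs_of_pos (Real.rpow_pos_of_pos hny _), mul_assoc s, hnorm,
    Real.mul_rpow hs.le (by positivity), ← Real.rpow_mul hny.le, ← hs_pow, ← hnorm_pow]
  ring_nf

section MonomialWeight

variable {ι : Type*} [Fintype ι]

noncomputable def monomialWeight (A : ι → ℝ) (y : EuclideanSpace ℝ ι) : ℝ := ∏ i, |y i| ^ A i

theorem monomialWeight_smul (A : ι → ℝ) {t : ℝ} (ht : 0 < t) (y : EuclideanSpace ℝ ι) :
    monomialWeight A (t • y) = t ^ (∑ i, A i) * monomialWeight A y := by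
  simp only [monomialWeight, PiLp.smul_apply, smul_eq_mul, abs_mul, abs_of_pos ht,
    Real.mul_rpow ht.le (abs_nonneg _), Finset.prod_mul_distrib, Real.rpow_sum_of_pos ht]

theorem differentiableAt_monomialWeight (A : ι → ℝ) {x : EuclideanSpace ℝ ι}
    (hx : ∀ i, x i ≠ 0) : DifferentiableAt ℝ (monomialWeight A) x := by
  classical
  have hfactor (i : ι) : DifferentiableAt ℝ (fun y : EuclideanSpace ℝ ι => |y i| ^ A i) x :=
    ((EuclideanSpace.proj i).differentiableAt.abs (hx i)).rpow_const
      (Or.inl (abs_ne_zero.2 (hx i)))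
  exact (HasFDerivAt.finsetProd fun i _ => (hfactor i).hasFDerivAt).differentiableAt

end MonomialWeight

theorem stmt_15_general (N : ℕ) (hN : 1 ≤ N) (p s : ℝ) (hp : 1 < p) (hs : 0 < s)
    (A : Fin N → ℝ)
    (u : EuclideanSpace ℝ (Fin N) → ℝ) (hu : ∀ y, u y = ‖y‖ ^ (-s))
    (V : EuclideanSpace ℝ (Fin N) → EuclideanSpace ℝ (Fin N))
    (hVdef : ∀ y, V y =
      ((∏ i, |y i| ^ A i) * ‖gradient u y‖ ^ (p - 2)) • gradient u y)
    (x : EuclideanSpace ℝ (Fin N)) (hx : ∀ i, x i ≠ 0) :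
    (DifferentiableAt ℝ V x ∧
      -(∑ i, fderiv ℝ V x (EuclideanSpace.single i (1 : ℝ)) i) =
        s ^ (p - 1) * (((N : ℝ) + ∑ i, A i) - (p - 1) * s - p) *
          (∏ i, |x i| ^ A i) * ‖x‖ ^ (-(p - 1) * s - p)) ∧
    (1 < s → s < (((N : ℝ) + ∑ i, A i) - p) / (p - 1) →
      0 < s ^ (p - 1) * (((N : ℝ) + ∑ i, A i) - (p - 2) * (s + 1) - 2 - s)) := by
  have hx0 : x ≠ 0 := fun h => hx ⟨0, hN⟩ (by simp [h])
  set f := fun y : EuclideanSpace ℝ (Fin N) =>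
    -s ^ (p - 1) * (monomialWeight A y * ‖y‖ ^ (-(p - 1) * s - p))
  have hV : V =ᶠ[𝓝 x] fun y => f y • y := by
    filter_upwards [eventually_ne_nhds hx0] with y hy
    rw [hVdef, funext hu, mul_smul, norm_rpow_smul_gradient_norm_rpow hs hy, smul_smul]
    simp only [f, monomialWeight, mul_left_comm]
  have hf : DifferentiableAt ℝ f x :=
    ((differentiableAt_monomialWeight A hx).mul
      ((differentiableAt_id.norm ℝ hx0).rpow_const (Or.inl (norm_ne_zero_iff.2 hx0)))).const_mul _
  have hf_hom (t : ℝ) (ht : 0 < t) :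
      f (t • x) = t ^ (∑ i, A i + (-(p - 1) * s - p)) * f x := by
    simp only [f, monomialWeight_smul A ht, norm_smul, Real.norm_of_nonneg ht.le,
      Real.mul_rpow ht.le (norm_nonneg x), Real.rpow_add ht]
    ring
  refine ⟨⟨(hf.smul differentiableAt_id).congr_of_eventuallyEq hV, ?_⟩, fun _ hs_lt => ?_⟩
  · rw [hV.fderiv_eq, sum_fderiv_smul_self_apply_single hf,
      fderiv_apply_self_of_homogeneous hf hf_hom]
    simp only [f, monomialWeight, Fintype.card_fin]
    ring
  · rw [lt_div_iff₀ (by linarith)] at hs_lt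
    have hcoef : (N : ℝ) + ∑ i, A i - (p - 2) * (s + 1) - 2 - s =
        (N : ℝ) + ∑ i, A i - p - s * (p - 1) := by ring
    rw [hcoef]
    exact mul_pos (Real.rpow_pos_of_pos hs _) (by linarith)

/-- For `u(y) = ‖y‖^{-s}` and the monomial weight `x^A = ∏ |x_i|^{a_i}`, the field
`V(y) = y^A ‖∇u(y)‖^{p-2} ∇u(y)` is differentiable at every `x` with all coordinates
nonzero and `-div V(x) = s^{p-1}(N_A - (p-1)s - p) x^A ‖x‖^{-(p-1)s-p}`, the constant
being positive when `1 < s < (N_A - p)/(p-1)`. -/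
theorem stmt_15 (N : ℕ) (hN : 1 ≤ N) (p s : ℝ) (hp : 1 < p) (hs : 0 < s)
    (A : Fin N → ℝ) (hA : ∀ i, 0 ≤ A i)
    (u : EuclideanSpace ℝ (Fin N) → ℝ) (hu : ∀ y, u y = ‖y‖ ^ (-s))
    (V : EuclideanSpace ℝ (Fin N) → EuclideanSpace ℝ (Fin N))
    (hVdef : ∀ y, V y =
      ((∏ i, |y i| ^ A i) * ‖gradient u y‖ ^ (p - 2)) • gradient u y)
    (x : EuclideanSpace ℝ (Fin N)) (hx : ∀ i, x i ≠ 0) :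
    (DifferentiableAt ℝ V x ∧
      -(∑ i, fderiv ℝ V x (EuclideanSpace.single i (1 : ℝ)) i) =
        s ^ (p - 1) * (((N : ℝ) + ∑ i, A i) - (p - 1) * s - p) *
          (∏ i, |x i| ^ A i) * ‖x‖ ^ (-(p - 1) * s - p)) ∧
    (1 < s → s < (((N : ℝ) + ∑ i, A i) - p) / (p - 1) →
      0 < s ^ (p - 1) * (((N : ℝ) + ∑ i, A i) - (p - 2) * (s + 1) - 2 - s)) :=
  stmt_15_general N hN p s hp hs A u hu V hVdef x hx
end

section
/- Let N ≥ 1, p > 1, let Ω ⊆ ℝ^N be a bounded, open, connected set, and let w : ℝ^N → ℝ be measurable, locally integrable, with w(x) > 0 for Lebesgue-almost every x. Let u, v : ℝ^N → ℝ be continuously differentiable, suppose u ≤ v on the topological boundary ∂Ω, and suppose that for every nonnegative Lipschitz function φ : ℝ^N → ℝ vanishing on ℝ^N \ Ω one has ∫_Ω (‖∇u(x)‖^{p-2} ∇u(x) - ‖∇v(x)‖^{p-2} ∇v(x)) · ∇φ(x) · w(x) dx ≤ 0 (where ∇φ denotes the almost-everywhere defined gradient of φ). Then u ≤ v everywhere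 on Ω. -/
open MeasureTheory Set Filter Topology
open scoped RealInnerProductSpace

/-!
Put `g = u - v` and test the inequality with `φ = 𝟙_Ω · max g 0`, which is Lipschitz because
`g ≤ 0` on `∂Ω`. Where `g > 0` in `Ω` we have `∇φ = ∇u - ∇v`, elsewhere `∇φ = 0`, so by the strict
monotonicity of `z ↦ ‖z‖^(p-2) z` the integrand is nonnegative and vanishes only where
`∇u = ∇v`. As the integral is `≤ 0` and `w > 0` a.e., the open set `{x ∈ Ω | g x > 0, ∇u x ≠ ∇v x}`
is null, hence empty. So `g` is locally constant on `{x ∈ Ω | g x > 0}`, and a level set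
`{g = c}` with `c > 0` would be a nonempty bounded clopen subset of `ℝ^N`.
-/

theorem IsPreconnected.inter_frontier_nonempty {X : Type*} [TopologicalSpace X] {s t : Set X}
    (hs : IsPreconnected s) (hst : (s ∩ t).Nonempty) (hs_t : (s \ t).Nonempty) :
    (s ∩ frontier t).Nonempty := by
  by_contra h
  have hcover : s ⊆ interior t ∪ interior tᶜ := by
    rw [← compl_frontier_eq_union_interior]
    exact fun x hx hxf => h ⟨x, hx, hxf⟩
  obtain ⟨x, hxs, hxt⟩ := hst
  obtain ⟨y, hys, hyt⟩ := hs_t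
  obtain ⟨z, -, hz, hz'⟩ := hs _ _ isOpen_interior isOpen_interior hcover
    ⟨x, hxs, (hcover hxs).resolve_right fun h => interior_subset h hxt⟩
    ⟨y, hys, (hcover hys).resolve_left fun h => hyt (interior_subset h)⟩
  exact interior_subset hz' (interior_subset hz)

theorem ContDiff.exists_lipschitzOnWith_of_isBounded {E F : Type*} [NormedAddCommGroup E]
    [NormedSpace ℝ E] [ProperSpace E] [NormedAddCommGroup F] [NormedSpace ℝ F] {f : E → F}
    (hf : ContDiff ℝ 1 f) {s : Set E} (hs : Bornology.IsBounded s) :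
    ∃ K, LipschitzOnWith K f s := by
  obtain ⟨R, hR⟩ := hs.subset_closedBall 0
  obtain ⟨K, hK⟩ := hf.contDiffOn.exists_lipschitzOnWith one_ne_zero (convex_closedBall 0 R)
    (isCompact_closedBall 0 R)
  exact ⟨K, hK.mono hR⟩

theorem LipschitzOnWith.lipschitzWith_indicator_max_zero {E : Type*} [NormedAddCommGroup E]
    [NormedSpace ℝ E] {s : Set E} {g : E → ℝ} {K : NNReal} (hg : LipschitzOnWith K g (closure s)) (hfront : ∀ x ∈ frontier s, g x ≤ 0) :
    LipschitzWith K (s.indicator fun x => max (g x) 0) := by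
  set φ := s.indicator fun x => max (g x) 0
  have hφ_nonneg : ∀ x, 0 ≤ φ x := indicator_nonneg fun _ _ => le_max_right _ _
  refine LipschitzWith.of_le_add_mul K fun x y => ?_
  by_cases hx : x ∈ s ∧ 0 < g x
  swap
  · have hφx : φ x = 0 := by
      by_cases hxs : x ∈ s
      · simp [φ, hxs, le_of_not_gt (hx ⟨hxs, ·⟩)]
      · simp [φ, hxs]
    rw [hφx]
    exact add_nonneg (hφ_nonneg y) (by positivity)
  -- `z = y`, or the point where the segment `[x, y]` leaves `s`
  obtain ⟨z, hz, hgz, hxz⟩ : ∃ z ∈ closure s, g z ≤ φ y ∧ dist x z ≤ dist x y := by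
    by_cases hy : y ∈ s
    · exact ⟨y, subset_closure hy, by simp [φ, hy], le_rfl⟩
    obtain ⟨z, hzxy, hzs⟩ := (convex_segment x y).isPreconnected.inter_frontier_nonempty
      ⟨x, left_mem_segment ℝ x y, hx.1⟩ ⟨y, right_mem_segment ℝ x y, hy⟩
    refine ⟨z, frontier_subset_closure hzs, (hfront z hzs).trans (hφ_nonneg y), ?_⟩
    linarith [dist_add_dist_of_mem_segment hzxy, dist_nonneg (x := z) (y := y)]
  calc φ x = g x := by simp [φ, hx.1, hx.2.le]
    _ ≤ g z + K * dist x z := hg.le_add_mul (subset_closure hx.1) hz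
    _ ≤ φ y + K * dist x y := by gcongr

section Gradient

variable {F : Type*} [NormedAddCommGroup F] [InnerProductSpace ℝ F] [CompleteSpace F]
  {f f₁ f₂ : F → ℝ} {x : F}

theorem IsLocalMin.gradient_eq_zero (h : IsLocalMin f x) : gradient f x = 0 := by
  simp [gradient, h.fderiv_eq_zero]

theorem gradient_sub (h₁ : DifferentiableAt ℝ f₁ x) (h₂ : DifferentiableAt ℝ f₂ x) :
    gradient (fun y => f₁ y - f₂ y) x = gradient f₁ x - gradient f₂ x := by
  simp only [gradient, fderiv_fun_sub h₁ h₂, map_sub]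

theorem LipschitzWith.norm_gradient_le {K : NNReal} (hf : LipschitzWith K f) (x : F) :
    ‖gradient f x‖ ≤ K := by
  simpa [gradient] using norm_fderiv_le_of_lipschitz ℝ hf (x₀ := x)

theorem measurable_gradient [MeasurableSpace F] [BorelSpace F] :
    Measurable (gradient f) :=
  (InnerProductSpace.toDual ℝ F).symm.continuous.measurable.comp (measurable_fderiv ℝ f)

theorem ContDiff.continuous_gradient (hf : ContDiff ℝ 1 f) : Continuous (gradient f) :=
  (InnerProductSpace.toDual ℝ F).symm.continuous.comp (hf.continuous_fderiv one_ne_zero)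

end Gradient

section IndicatorMaxZero

variable {F : Type*} [NormedAddCommGroup F] [InnerProductSpace ℝ F] [CompleteSpace F]
  {s : Set F} {g : F → ℝ} {x : F}

theorem gradient_indicator_max_zero_of_pos (hs : IsOpen s) (hg : ContinuousAt g x) (hx : x ∈ s)
    (hgx : 0 < g x) : gradient (s.indicator fun y => max (g y) 0) x = gradient g x := by
  refine Filter.EventuallyEq.gradient_eq ?_
  filter_upwards [hs.mem_nhds hx, hg.eventually (lt_mem_nhds hgx)] with y hys hgy
  simp [hys, hgy.le]

theorem gradient_indicator_max_zero_of_nonpos (hgx : g x ≤ 0) :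
    gradient (s.indicator fun y => max (g y) 0) x = 0 := by
  refine IsLocalMin.gradient_eq_zero (Eventually.of_forall fun y => ?_)
  have hφx : s.indicator (fun y => max (g y) 0) x = 0 :=
    indicator_apply_eq_zero.2 fun _ => max_eq_right hgx
  rw [hφx]
  exact indicator_nonneg (fun _ _ => le_max_right _ _) y

end IndicatorMaxZero

section PFlux

variable {E : Type*} [NormedAddCommGroup E] [InnerProductSpace ℝ E] {p : ℝ}

/-- The `p`-Laplacian of `u` is `-div (pFlux p (∇u))`. -/
noncomputable def pFlux (p : ℝ) (z : E) : E := ‖z‖ ^ (p - 2) • z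

theorem norm_pFlux (hp : p ≠ 1) (z : E) : ‖pFlux p z‖ = ‖z‖ ^ (p - 1) := by
  have h : p - 2 + 1 ≠ 0 := by contrapose! hp; linarith
  rw [pFlux, norm_smul, Real.norm_of_nonneg (by positivity),
    ← Real.rpow_add_one' (norm_nonneg z) h]
  ring_nf

theorem mul_sub_le_inner_pFlux_sub (hp : p ≠ 1) (a b : E) :
    (‖a‖ ^ (p - 1) - ‖b‖ ^ (p - 1)) * (‖a‖ - ‖b‖) ≤ ⟪pFlux p a - pFlux p b, a - b⟫ := by
  have hflux : ∀ z : E, ‖z‖ ^ (p - 2) * ‖z‖ = ‖z‖ ^ (p - 1) := fun z => by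
    rw [← norm_pFlux hp, pFlux, norm_smul, Real.norm_of_nonneg (by positivity)]
  have hinner : ⟪pFlux p a - pFlux p b, a - b⟫
      = ‖a‖ ^ (p - 2) * ‖a‖ ^ 2 + ‖b‖ ^ (p - 2) * ‖b‖ ^ 2
        - (‖a‖ ^ (p - 2) + ‖b‖ ^ (p - 2)) * ⟪a, b⟫ := by
    simp only [pFlux, inner_sub_left, inner_sub_right, real_inner_smul_left,
      real_inner_self_eq_norm_sq, real_inner_comm a b]
    ring
  have hcs : (‖a‖ ^ (p - 2) + ‖b‖ ^ (p - 2)) * ⟪a, b⟫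
      ≤ (‖a‖ ^ (p - 2) + ‖b‖ ^ (p - 2)) * (‖a‖ * ‖b‖) :=
    mul_le_mul_of_nonneg_left (real_inner_le_norm a b) (by positivity)
  rw [hinner, ← hflux a, ← hflux b]
  nlinarith

theorem inner_pFlux_sub_pos (hp : 1 < p) {a b : E} (hab : a ≠ b) :
    0 < ⟪pFlux p a - pFlux p b, a - b⟫ := by
  rcases lt_trichotomy ‖a‖ ‖b‖ with hlt | heq | hgt
  · refine lt_of_lt_of_le ?_ (mul_sub_le_inner_pFlux_sub hp.ne' a b)
    exact mul_pos_of_neg_of_neg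
      (sub_neg.2 (Real.rpow_lt_rpow (norm_nonneg a) hlt (by linarith))) (sub_neg.2 hlt)
  · have hb : b ≠ 0 := by rintro rfl; exact hab (norm_eq_zero.1 (heq.trans norm_zero))
    have hsub : pFlux p a - pFlux p b = ‖b‖ ^ (p - 2) • (a - b) := by
      rw [pFlux, pFlux, heq, smul_sub]
    rw [hsub, real_inner_smul_left, real_inner_self_eq_norm_sq]
    have := norm_pos_iff.2 hb
    have := norm_pos_iff.2 (sub_ne_zero.2 hab)
    positivity
  · refine lt_of_lt_of_le ?_ (mul_sub_le_inner_pFlux_sub hp.ne' a b)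
    exact mul_pos
      (sub_pos.2 (Real.rpow_lt_rpow (norm_nonneg b) hgt (by linarith))) (sub_pos.2 hgt)

theorem inner_pFlux_sub_nonneg (hp : 1 < p) (a b : E) :
    0 ≤ ⟪pFlux p a - pFlux p b, a - b⟫ := by
  rcases eq_or_ne a b with rfl | hab
  · simp
  · exact (inner_pFlux_sub_pos hp hab).le

theorem measurable_pFlux [MeasurableSpace E] [BorelSpace E] :
    Measurable (pFlux p : E → E) :=
  (measurable_norm.pow_const _).smul measurable_id

end PFlux

theorem integrableOn_inner_pFlux_sub_mul {E : Type*} [NormedAddCommGroup E]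
    [InnerProductSpace ℝ E] [MeasurableSpace E] [BorelSpace E] [SecondCountableTopology E]
    {μ : Measure E} {K : Set E} (hK : IsCompact K) {p : ℝ} (hp : 1 < p) {a b ψ : E → E}
    (ha : Continuous a) (hb : Continuous b) (hψ : AEStronglyMeasurable ψ μ) {C : ℝ} (hψC : ∀ x, ‖ψ x‖ ≤ C)
    {w : E → ℝ} (hw : LocallyIntegrable w μ) :
    IntegrableOn (fun x => ⟪pFlux p (a x) - pFlux p (b x), ψ x⟫ * w x) K μ := by
  have hp' : 0 ≤ p - 1 := by linarith
  obtain ⟨D, hD⟩ := hK.exists_bound_of_continuousOn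
    ((ha.norm.rpow_const fun _ => Or.inr hp').add
      (hb.norm.rpow_const fun _ => Or.inr hp')).continuousOn
  have hmeas : Measurable fun x => pFlux p (a x) - pFlux p (b x) :=
    (measurable_pFlux.comp ha.measurable).sub (measurable_pFlux.comp hb.measurable)
  refine Integrable.mono' ((hw.integrableOn_isCompact hK).norm.const_mul (D * C))
    ((hmeas.aestronglyMeasurable.inner hψ.restrict).mul hw.aestronglyMeasurable.restrict) ?_
  refine (ae_restrict_iff' hK.measurableSet).2 (Eventually.of_forall fun x hx => ?_)
  have hflux : ‖pFlux p (a x) - pFlux p (b x)‖ ≤ D := by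
    refine (norm_sub_le _ _).trans ?_
    rw [norm_pFlux hp.ne', norm_pFlux hp.ne']
    exact (le_abs_self _).trans (by simpa using hD x hx)
  rw [norm_mul]
  gcongr
  exact (norm_inner_le_norm _ _).trans
    (mul_le_mul hflux (hψC x) (norm_nonneg _) ((norm_nonneg _).trans hflux))

theorem IsOpen.eq_empty_of_setIntegral_mul_nonpos {X : Type*} [TopologicalSpace X]
    [MeasurableSpace X] {μ : Measure X} [μ.IsOpenPosMeasure] {s V : Set X} {f w : X → ℝ}
    (hV : IsOpen V) (hVs : V ⊆ s) (hs : MeasurableSet s) (hf : ∀ x ∈ s, 0 ≤ f x)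
    (hfV : ∀ x ∈ V, 0 < f x) (hw : ∀ᵐ x ∂μ, 0 < w x)
    (hint : IntegrableOn (fun x => f x * w x) s μ) (hle : ∫ x in s, f x * w x ∂μ ≤ 0) :
    V = ∅ := by
  have hnonneg : 0 ≤ᵐ[μ.restrict s] fun x => f x * w x := by
    filter_upwards [ae_restrict_mem hs, ae_restrict_of_ae hw] with x hx hwx
    exact mul_nonneg (hf x hx) hwx.le
  have hzero : (fun x => f x * w x) =ᵐ[μ.restrict s] 0 :=
    (integral_eq_zero_iff_of_nonneg_ae hnonneg hint).1
      (le_antisymm hle (integral_nonneg_of_ae hnonneg))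
  refine hV.eq_empty_of_measure_zero (μ := μ) ?_
  rw [← Measure.restrict_eq_self μ hVs, measure_eq_zero_iff_ae_notMem]
  filter_upwards [hzero, ae_restrict_of_ae hw] with x hx hwx hxV
  exact (mul_pos (hfV x hxV) hwx).ne' hx

theorem le_zero_of_fderiv_eq_zero_of_pos {E : Type*} [NormedAddCommGroup E] [NormedSpace ℝ E]
    [Nontrivial E] {s : Set E} {g : E → ℝ} (hs : Bornology.IsBounded s) (hso : IsOpen s)
    (hg : Differentiable ℝ g) (hfront : ∀ x ∈ frontier s, g x ≤ 0)
    (hderiv : ∀ x ∈ s, 0 < g x → fderiv ℝ g x = 0) : ∀ x ∈ s, g x ≤ 0 := by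
  intro x₀ hx₀
  by_contra! hpos
  set U := s ∩ g ⁻¹' Ioi 0
  set M := U ∩ g ⁻¹' {g x₀}
  have hMopen : IsOpen M :=
    (hso.inter (isOpen_Ioi.preimage hg.continuous)).isOpen_inter_preimage_of_fderiv_eq_zero
      hg.differentiableOn (fun x hx => hderiv x hx.1 hx.2) _
  have hMclosed : IsClosed M := by
    convert isClosed_closure.inter (isClosed_singleton.preimage hg.continuous) using 1
    ext x
    refine ⟨fun hx => ⟨subset_closure hx.1.1, hx.2⟩, fun ⟨hxs, hx⟩ => ?_⟩
    have hgx : g x = g x₀ := hx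
    rcases (closure_eq_self_union_frontier s ▸ hxs : x ∈ s ∪ frontier s) with hxs | hxs
    · refine ⟨⟨hxs, ?_⟩, hx⟩
      rw [mem_preimage, hgx]
      exact hpos
    · linarith [hfront x hxs]
  have hM : M = univ := IsClopen.eq_univ ⟨hMclosed, hMopen⟩ ⟨x₀, ⟨hx₀, hpos⟩, rfl⟩
  exact NormedSpace.unbounded_univ ℝ E (hs.subset (hM ▸ fun x hx => hx.1.1))

theorem gradient_eq_of_setIntegral_inner_pFlux_sub_nonpos {E : Type*} [NormedAddCommGroup E]
    [InnerProductSpace ℝ E] [FiniteDimensional ℝ E] [MeasurableSpace E] [BorelSpace E]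
    {μ : Measure E} [μ.IsOpenPosMeasure] {p : ℝ} (hp : 1 < p) {Ω : Set E}
    (hΩb : Bornology.IsBounded Ω) (hΩo : IsOpen Ω) {u v : E → ℝ} (hu : ContDiff ℝ 1 u)
    (hv : ContDiff ℝ 1 v) {w : E → ℝ} (hw : LocallyIntegrable w μ) (hwpos : ∀ᵐ x ∂μ, 0 < w x)
    {K : NNReal} (hφ : LipschitzWith K (Ω.indicator fun x => max (u x - v x) 0))
    (hle : ∫ x in Ω, ⟪pFlux p (gradient u x) - pFlux p (gradient v x),
      gradient (Ω.indicator fun x => max (u x - v x) 0) x⟫ * w x ∂μ ≤ 0) :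
    ∀ x ∈ Ω, v x < u x → gradient u x = gradient v x := by
  set φ := Ω.indicator fun x => max (u x - v x) 0
  have hgc : Continuous fun x => u x - v x := hu.continuous.sub hv.continuous
  have hgradφ : ∀ x ∈ Ω, v x < u x → gradient φ x = gradient u x - gradient v x :=
    fun x hx hvu => by
      rw [gradient_indicator_max_zero_of_pos hΩo hgc.continuousAt hx (sub_pos.2 hvu),
        gradient_sub ((hu.differentiable one_ne_zero) x) ((hv.differentiable one_ne_zero) x)]
  have hV : {x | x ∈ Ω ∧ v x < u x ∧ gradient u x ≠ gradient v x} = ∅ := by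
    refine IsOpen.eq_empty_of_setIntegral_mul_nonpos
      (f := fun x => ⟪pFlux p (gradient u x) - pFlux p (gradient v x), gradient φ x⟫)
      ?_ (fun x hx => hx.1) hΩo.measurableSet ?_ ?_ hwpos ?_ hle
    · exact hΩo.inter ((isOpen_lt hv.continuous hu.continuous).inter
        (isOpen_ne_fun hu.continuous_gradient hv.continuous_gradient))
    · intro x hx
      rcases le_or_gt (u x) (v x) with huv | hvu
      · have h0 : gradient φ x = 0 := gradient_indicator_max_zero_of_nonpos (sub_nonpos.2 huv)
        simp [h0]
      · rw [hgradφ x hx hvu]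
        exact inner_pFlux_sub_nonneg hp _ _
    · intro x hx
      rw [hgradφ x hx.1 hx.2.1]
      exact inner_pFlux_sub_pos hp hx.2.2
    · exact (integrableOn_inner_pFlux_sub_mul hΩb.isCompact_closure hp hu.continuous_gradient
        hv.continuous_gradient measurable_gradient.aestronglyMeasurable hφ.norm_gradient_le
        hw).mono_set subset_closure
  intro x hx hvu
  by_contra h
  exact eq_empty_iff_forall_notMem.1 hV x ⟨hx, hvu, h⟩

theorem stmt_16_general (N : ℕ) (hN : 1 ≤ N) (p : ℝ) (hp : 1 < p)
    (Ω : Set (EuclideanSpace ℝ (Fin N)))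
    (hΩb : Bornology.IsBounded Ω) (hΩo : IsOpen Ω)
    (w : EuclideanSpace ℝ (Fin N) → ℝ)
    (hwloc : LocallyIntegrable w volume) (hwpos : ∀ᵐ x, 0 < w x)
    (u v : EuclideanSpace ℝ (Fin N) → ℝ)
    (hu : ContDiff ℝ 1 u) (hv : ContDiff ℝ 1 v)
    (hbd : ∀ x ∈ frontier Ω, u x ≤ v x)
    (hweak : ∀ φ : EuclideanSpace ℝ (Fin N) → ℝ,
      (∃ K, LipschitzWith K φ) → (∀ x, 0 ≤ φ x) → (∀ x ∉ Ω, φ x = 0) →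
      (∫ x in Ω,
        ⟪(‖gradient u x‖ ^ (p - 2)) • gradient u x -
            (‖gradient v x‖ ^ (p - 2)) • gradient v x, gradient φ x⟫ * w x) ≤ 0) :
    ∀ x ∈ Ω, u x ≤ v x := by
  have : Nonempty (Fin N) := ⟨⟨0, hN⟩⟩
  have hud := hu.differentiable one_ne_zero
  have hvd := hv.differentiable one_ne_zero
  have hfront : ∀ x ∈ frontier Ω, u x - v x ≤ 0 := fun x hx => sub_nonpos.2 (hbd x hx)
  obtain ⟨K, hK⟩ := (hu.sub hv).exists_lipschitzOnWith_of_isBounded hΩb.closure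
  have hφ : LipschitzWith K (Ω.indicator fun x => max (u x - v x) 0) :=
    hK.lipschitzWith_indicator_max_zero hfront
  have hgrad := gradient_eq_of_setIntegral_inner_pFlux_sub_nonpos hp hΩb hΩo hu hv hwloc hwpos hφ
    (hweak _ ⟨K, hφ⟩ (indicator_nonneg fun _ _ => le_max_right _ _)
      fun _ hx => indicator_of_notMem hx _)
  refine fun x hx => sub_nonpos.1 (le_zero_of_fderiv_eq_zero_of_pos hΩb hΩo (hud.sub hvd) hfront
    (fun y hy hgy => ?_) x hx)
  rw [fderiv_sub (hud y) (hvd y), ← toDual_gradient, ← toDual_gradient,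
    hgrad y hy (sub_pos.1 hgy), sub_self]

/-- Comparison principle for the weighted `p`-Laplace operator: if `Ω ⊆ ℝ^N` is bounded,
open and connected, `w` is a measurable, locally integrable, a.e.-positive weight,
`u, v` are `C¹`, `u ≤ v` on `∂Ω`, and
`∫_Ω (‖∇u‖^{p-2}∇u - ‖∇v‖^{p-2}∇v) · ∇φ · w ≤ 0` for every nonnegative Lipschitz `φ`
vanishing outside `Ω`, then `u ≤ v` on `Ω`. -/
theorem stmt_16 (N : ℕ) (hN : 1 ≤ N) (p : ℝ) (hp : 1 < p)
    (Ω : Set (EuclideanSpace ℝ (Fin N)))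
    (hΩb : Bornology.IsBounded Ω) (hΩo : IsOpen Ω) (hΩc : IsConnected Ω)
    (w : EuclideanSpace ℝ (Fin N) → ℝ) (hwmeas : Measurable w)
    (hwloc : LocallyIntegrable w volume) (hwpos : ∀ᵐ x, 0 < w x)
    (u v : EuclideanSpace ℝ (Fin N) → ℝ)
    (hu : ContDiff ℝ 1 u) (hv : ContDiff ℝ 1 v)
    (hbd : ∀ x ∈ frontier Ω, u x ≤ v x)
    (hweak : ∀ φ : EuclideanSpace ℝ (Fin N) → ℝ,
      (∃ K, LipschitzWith K φ) → (∀ x, 0 ≤ φ x) → (∀ x ∉ Ω, φ x = 0) →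
      (∫ x in Ω,
        ⟪(‖gradient u x‖ ^ (p - 2)) • gradient u x -
            (‖gradient v x‖ ^ (p - 2)) • gradient v x, gradient φ x⟫ * w x) ≤ 0) :
    ∀ x ∈ Ω, u x ≤ v x :=
  stmt_16_general N hN p hp Ω hΩb hΩo w hwloc hwpos u v hu hv hbd hweak
end
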